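/- Let f = h + conj(g) be a sense-preserving harmonic mapping in D with ||P_h|| < ∞. Then for any ε₁, ε₂ in the closed unit disk, | ||P_{h+ε₁g}|| - ||P_{h+ε₂g}|| | ≤ 2. -/

import Mathlib

open Complex Metric

/-- Pre-Schwarzian derivative of an analytic function. -/
noncomputable def pd (F : ℂ → ℂ) (z : ℂ) : ℂ := deriv (deriv F) z / deriv F z

/-- Dilatation of the harmonic mapping `h + conj g`. -/
noncomputable def dil (h g : ℂ → ℂ) (z : ℂ) : ℂ := deriv g z / deriv h z

/-- Pre-Schwarzian derivative of the harmonic mapping `h + conj g`. -/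
noncomputable def PH (h g : ℂ → ℂ) (z : ℂ) : ℂ :=
  pd h z - (starRingEnd ℂ) (dil h g z) * deriv (dil h g) z / ((1 - ‖dil h g z‖ ^ 2 : ℝ) : ℂ)

/-- Pre-Schwarzian norm. -/
noncomputable def pnorm (P : ℂ → ℂ) : ℝ :=
  ⨆ z : Metric.ball (0 : ℂ) 1, (1 - ‖(z : ℂ)‖ ^ 2) * ‖P (z : ℂ)‖

/-- The range whose boundedness expresses finiteness of the pre-Schwarzian norm. -/
def pbdd (P : ℂ → ℂ) : Prop :=
  BddAbove (Set.range fun z : Metric.ball (0 : ℂ) 1 => (1 - ‖(z : ℂ)‖ ^ 2) * ‖P (z : ℂ)‖)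

/-- `h + conj g` is a sense-preserving harmonic mapping in the unit disk. -/
def SPH (h g : ℂ → ℂ) : Prop :=
  DifferentiableOn ℂ h (Metric.ball (0 : ℂ) 1) ∧
  DifferentiableOn ℂ g (Metric.ball (0 : ℂ) 1) ∧ g 0 = 0 ∧
  ∀ z ∈ Metric.ball (0 : ℂ) 1, ‖deriv g z‖ < ‖deriv h z‖

/-!
Write `ω = g' / h'` for the dilatation. Differentiating `h' + ε g' = h' (1 + ε ω)` logarithmically
gives `P_{h+εg} = P_h + ε ω' / (1 + ε ω)`, which rearranges to
`P_{h+εg} - P_f = ω' / (1 - |ω|²) · (ε + conj ω) / (1 + ε ω)`.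
The last factor lies in the closed unit disc, and the Schwarz–Pick lemma gives
`(1 - |z|²) |ω'| ≤ 1 - |ω|²`, so `‖P_{h+εg}‖` is within `1` of `‖P_f‖` for every `|ε| ≤ 1`.
For `ε = 0` this makes `‖P_f‖`, hence every `‖P_{h+εg}‖`, finite; the triangle inequality
through `‖P_f‖` gives the bound `2`.
-/

open ComplexConjugate Topology

lemma one_sub_conj_mul_self (a : ℂ) : 1 - conj a * a = ((1 - ‖a‖ ^ 2 : ℝ) : ℂ) := by
  rw [mul_comm, Complex.mul_conj, Complex.normSq_eq_norm_sq]
  push_cast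
  ring

lemma sq_norm_one_sub_conj_mul_sub_sq_norm_sub (a w : ℂ) :
    ‖1 - conj a * w‖ ^ 2 - ‖w - a‖ ^ 2 = (1 - ‖a‖ ^ 2) * (1 - ‖w‖ ^ 2) := by
  simp only [Complex.sq_norm, Complex.normSq_apply, Complex.sub_re, Complex.sub_im,
    Complex.mul_re, Complex.mul_im, Complex.one_re, Complex.one_im, Complex.conj_re,
    Complex.conj_im]
  ring

lemma norm_sub_le_norm_one_sub_conj_mul {a w : ℂ} (ha : ‖a‖ ≤ 1) (hw : ‖w‖ ≤ 1) :
    ‖w - a‖ ≤ ‖1 - conj a * w‖ := by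
  have := sq_norm_one_sub_conj_mul_sub_sq_norm_sub a w
  have hprod : 0 ≤ (1 - ‖a‖ ^ 2) * (1 - ‖w‖ ^ 2) :=
    mul_nonneg (by nlinarith [norm_nonneg a]) (by nlinarith [norm_nonneg w])
  exact pow_le_pow_iff_left₀ (norm_nonneg _) (norm_nonneg _) two_ne_zero |>.mp (by linarith)

lemma norm_sub_lt_norm_one_sub_conj_mul {a w : ℂ} (ha : ‖a‖ < 1) (hw : ‖w‖ < 1) :
    ‖w - a‖ < ‖1 - conj a * w‖ := by
  have := sq_norm_one_sub_conj_mul_sub_sq_norm_sub a w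
  have hprod : 0 < (1 - ‖a‖ ^ 2) * (1 - ‖w‖ ^ 2) :=
    mul_pos (by nlinarith [norm_nonneg a]) (by nlinarith [norm_nonneg w])
  exact pow_lt_pow_iff_left₀ (norm_nonneg _) (norm_nonneg _) two_ne_zero |>.mp (by linarith)

lemma one_add_mul_ne_zero {a w : ℂ} (h : ‖a‖ * ‖w‖ < 1) : 1 + a * w ≠ 0 := by
  intro h0
  rw [← norm_mul, eq_neg_of_add_eq_zero_right h0, norm_neg, norm_one] at h
  exact h.false

lemma one_sub_conj_mul_ne_zero {a w : ℂ} (ha : ‖a‖ < 1) (hw : ‖w‖ ≤ 1) :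
    1 - conj a * w ≠ 0 := by
  rw [sub_eq_add_neg, ← neg_mul]
  refine one_add_mul_ne_zero ?_
  rw [norm_neg, RCLike.norm_conj]
  nlinarith [norm_nonneg a, norm_nonneg w]

noncomputable def mobius (a w : ℂ) : ℂ := (w - a) / (1 - conj a * w)

lemma norm_mobius_lt_one {a w : ℂ} (ha : ‖a‖ < 1) (hw : ‖w‖ < 1) : ‖mobius a w‖ < 1 := by
  rw [mobius, norm_div, div_lt_one (norm_pos_iff.mpr (one_sub_conj_mul_ne_zero ha hw.le))]
  exact norm_sub_lt_norm_one_sub_conj_mul ha hw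

lemma mapsTo_mobius {a : ℂ} (ha : ‖a‖ < 1) : Set.MapsTo (mobius a) (ball 0 1) (ball 0 1) :=
  fun _ hw => mem_ball_zero_iff.mpr <| norm_mobius_lt_one ha (mem_ball_zero_iff.mp hw)

lemma hasDerivAt_mobius {a w : ℂ} (hw : 1 - conj a * w ≠ 0) :
    HasDerivAt (mobius a) ((1 - conj a * a) / (1 - conj a * w) ^ 2) w := by
  have hden : HasDerivAt (fun x : ℂ => 1 - conj a * x) (-conj a) w := by
    simpa using ((hasDerivAt_id w).const_mul (conj a)).const_sub 1
  exact (((hasDerivAt_id w).sub_const a).div hden hw).congr_deriv (by simp only [id]; ring)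

lemma differentiableOn_mobius {a : ℂ} (ha : ‖a‖ < 1) : DifferentiableOn ℂ (mobius a) (ball 0 1) :=
  fun _ hw => (hasDerivAt_mobius (one_sub_conj_mul_ne_zero ha
    (mem_ball_zero_iff.mp hw).le)).differentiableAt.differentiableWithinAt

lemma mobius_self (a : ℂ) : mobius a a = 0 := by simp [mobius]

lemma mobius_neg_zero (a : ℂ) : mobius (-a) 0 = a := by simp [mobius]

lemma hasDerivAt_mobius_self {a : ℂ} (ha : ‖a‖ < 1) :
    HasDerivAt (mobius a) (((1 - ‖a‖ ^ 2)⁻¹ : ℝ) : ℂ) a := by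
  have hpos : (0 : ℝ) < 1 - ‖a‖ ^ 2 := by nlinarith [norm_nonneg a]
  have hne : (((1 - ‖a‖ ^ 2 : ℝ)) : ℂ) ≠ 0 := Complex.ofReal_ne_zero.mpr hpos.ne'
  convert hasDerivAt_mobius (one_sub_conj_mul_ne_zero ha ha.le) using 1
  rw [one_sub_conj_mul_self]
  push_cast
  field_simp

lemma hasDerivAt_mobius_neg_zero (a : ℂ) :
    HasDerivAt (mobius (-a)) ((1 - ‖a‖ ^ 2 : ℝ) : ℂ) 0 := by
  convert hasDerivAt_mobius (a := -a) (w := 0) (by simp) using 1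
  rw [map_neg, neg_mul_neg, one_sub_conj_mul_self]
  simp

/-- **Schwarz–Pick lemma**: Schwarz's lemma applied to `mobius (ω z) ∘ ω ∘ mobius (-z)`. -/
theorem one_sub_sq_norm_mul_norm_deriv_le {ω : ℂ → ℂ} (hd : DifferentiableOn ℂ ω (ball 0 1))
    (hmaps : Set.MapsTo ω (ball 0 1) (ball 0 1)) {z : ℂ} (hz : z ∈ ball (0 : ℂ) 1) :
    (1 - ‖z‖ ^ 2) * ‖deriv ω z‖ ≤ 1 - ‖ω z‖ ^ 2 := by
  have ha : ‖ω z‖ < 1 := mem_ball_zero_iff.mp (hmaps hz)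
  have hz' : ‖-z‖ < 1 := by rwa [norm_neg, ← mem_ball_zero_iff]
  have hpos : (0 : ℝ) < 1 - ‖ω z‖ ^ 2 := by nlinarith [norm_nonneg (ω z)]
  have hinner : Set.MapsTo (ω ∘ mobius (-z)) (ball 0 1) (ball 0 1) :=
    hmaps.comp (mapsTo_mobius hz')
  set F := mobius (ω z) ∘ ω ∘ mobius (-z)
  have hF0 : F 0 = 0 := by simp only [F, Function.comp_apply, mobius_neg_zero, mobius_self]
  have hF : HasDerivAt F (((1 - ‖ω z‖ ^ 2)⁻¹ : ℝ) * (deriv ω z * (1 - ‖z‖ ^ 2 : ℝ))) 0 := by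
    have hω : HasDerivAt ω (deriv ω z) (mobius (-z) 0) := by
      rw [mobius_neg_zero]
      exact (hd.differentiableAt (isOpen_ball.mem_nhds hz)).hasDerivAt
    refine HasDerivAt.comp 0 ?_ (hω.comp 0 (hasDerivAt_mobius_neg_zero z))
    simpa only [Function.comp_apply, mobius_neg_zero] using hasDerivAt_mobius_self ha
  have hschwarz : ‖deriv F 0‖ ≤ 1 :=
    Complex.norm_deriv_le_one_of_mapsTo_ball
      ((differentiableOn_mobius ha).comp
        (hd.comp (differentiableOn_mobius hz') (mapsTo_mobius hz')) hinner)
      (by rw [hF0]; exact ((mapsTo_mobius ha).comp hinner).mono_right ball_subset_closedBall)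
      one_pos
  have hweight : (0 : ℝ) ≤ 1 - ‖z‖ ^ 2 := by nlinarith [mem_ball_zero_iff.mp hz, norm_nonneg z]
  rw [hF.deriv, norm_mul, norm_mul, Complex.norm_real, Complex.norm_real,
    Real.norm_of_nonneg (inv_pos.mpr hpos).le, Real.norm_of_nonneg hweight,
    inv_mul_le_iff₀ hpos] at hschwarz
  linarith

lemma norm_add_conj_le_norm_one_add_mul {ε w : ℂ} (hε : ‖ε‖ ≤ 1) (hw : ‖w‖ ≤ 1) :
    ‖ε + conj w‖ ≤ ‖1 + ε * w‖ := by
  calc ‖ε + conj w‖ = ‖conj w - -ε‖ := by rw [sub_neg_eq_add, add_comm]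
    _ ≤ ‖1 - conj (-ε) * conj w‖ :=
      norm_sub_le_norm_one_sub_conj_mul (by rwa [norm_neg]) (by rwa [RCLike.norm_conj])
    _ = ‖1 + ε * w‖ := by
      rw [← RCLike.norm_conj (1 + ε * w), map_add, map_mul, map_one, map_neg, neg_mul,
        sub_neg_eq_add]

section PreSchwarzian

variable {h g : ℂ → ℂ} {U : Set ℂ} {z : ℂ}

lemma deriv_add_const_mul_eventuallyEq (hh : DifferentiableOn ℂ h U)
    (hg : DifferentiableOn ℂ g U) (hU : IsOpen U) (hz : z ∈ U) (ε : ℂ) :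
    deriv (fun w => h w + ε * g w) =ᶠ[𝓝 z] fun w => deriv h w + ε * deriv g w := by
  filter_upwards [hU.mem_nhds hz] with w hw
  have hgw := hg.differentiableAt (hU.mem_nhds hw)
  rw [deriv_fun_add (hh.differentiableAt (hU.mem_nhds hw)) (hgw.const_mul ε),
    deriv_const_mul ε hgw]

lemma pd_add_const_mul (hh : DifferentiableOn ℂ h U) (hg : DifferentiableOn ℂ g U)
    (hU : IsOpen U) (hz : z ∈ U) {ε : ℂ} (hh' : deriv h z ≠ 0)
    (hε : 1 + ε * dil h g z ≠ 0) :
    pd (fun w => h w + ε * g w) z = pd h z + ε * deriv (dil h g) z / (1 + ε * dil h g z) := by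
  have hh₂ : DifferentiableAt ℂ (deriv h) z :=
    ((hh.analyticOnNhd hU).deriv z hz).differentiableAt
  have hg₂ : DifferentiableAt ℂ (deriv g) z :=
    ((hg.analyticOnNhd hU).deriv z hz).differentiableAt
  have hsum := deriv_add_const_mul_eventuallyEq hh hg hU hz ε
  have hdil : deriv (dil h g) z =
      (deriv (deriv g) z * deriv h z - deriv g z * deriv (deriv h) z) / deriv h z ^ 2 :=
    deriv_div hg₂ hh₂ hh'
  have hden : deriv h z + ε * deriv g z ≠ 0 := by
    rw [show deriv h z + ε * deriv g z = deriv h z * (1 + ε * dil h g z) by rw [dil]; field_simp]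
    exact mul_ne_zero hh' hε
  rw [pd, pd, hsum.deriv_eq, hsum.eq_of_nhds, deriv_fun_add hh₂ (hg₂.const_mul ε),
    deriv_const_mul ε hg₂, hdil, dil]
  field_simp
  ring

end PreSchwarzian

namespace SPH

variable {h g : ℂ → ℂ} {z : ℂ}

lemma deriv_ne_zero (hf : SPH h g) (hz : z ∈ ball (0 : ℂ) 1) : deriv h z ≠ 0 :=
  norm_pos_iff.mp ((norm_nonneg _).trans_lt (hf.2.2.2 z hz))

lemma norm_dil_lt_one (hf : SPH h g) (hz : z ∈ ball (0 : ℂ) 1) : ‖dil h g z‖ < 1 := by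
  rw [dil, norm_div, div_lt_one (norm_pos_iff.mpr (hf.deriv_ne_zero hz))]
  exact hf.2.2.2 z hz

lemma mapsTo_dil (hf : SPH h g) : Set.MapsTo (dil h g) (ball 0 1) (ball 0 1) :=
  fun _ hz => mem_ball_zero_iff.mpr (hf.norm_dil_lt_one hz)

lemma differentiableOn_dil (hf : SPH h g) : DifferentiableOn ℂ (dil h g) (ball 0 1) :=
  (hf.2.1.deriv isOpen_ball).div (hf.1.deriv isOpen_ball) fun _ hz => hf.deriv_ne_zero hz

lemma one_add_mul_dil_ne_zero (hf : SPH h g) (hz : z ∈ ball (0 : ℂ) 1) {ε : ℂ}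
    (hε : ‖ε‖ ≤ 1) : 1 + ε * dil h g z ≠ 0 :=
  one_add_mul_ne_zero (mul_lt_one_of_nonneg_of_lt_one_right hε (norm_nonneg _)
    (hf.norm_dil_lt_one hz))

lemma pd_add_const_mul_sub_PH (hf : SPH h g) (hz : z ∈ ball (0 : ℂ) 1) {ε : ℂ}
    (hε : ‖ε‖ ≤ 1) :
    pd (fun w => h w + ε * g w) z - PH h g z = deriv (dil h g) z /
      ((1 - ‖dil h g z‖ ^ 2 : ℝ) : ℂ) * ((ε + conj (dil h g z)) / (1 + ε * dil h g z)) := by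
  have hω := hf.one_add_mul_dil_ne_zero hz hε
  have hpos : ((1 - ‖dil h g z‖ ^ 2 : ℝ) : ℂ) ≠ 0 := by
    have := hf.norm_dil_lt_one hz
    exact Complex.ofReal_ne_zero.mpr (by nlinarith [norm_nonneg (dil h g z)])
  rw [pd_add_const_mul hf.1 hf.2.1 isOpen_ball hz (hf.deriv_ne_zero hz) hω, PH,
    ← one_sub_conj_mul_self] at *
  generalize conj (dil h g z) = c at *
  have hpos' : 1 - dil h g z * c ≠ 0 := by rwa [mul_comm]
  field_simp
  ring

lemma one_sub_sq_norm_mul_norm_pd_add_const_mul_sub_PH_le (hf : SPH h g)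
    (hz : z ∈ ball (0 : ℂ) 1) {ε : ℂ} (hε : ‖ε‖ ≤ 1) :
    (1 - ‖z‖ ^ 2) * ‖pd (fun w => h w + ε * g w) z - PH h g z‖ ≤ 1 := by
  have hω := hf.norm_dil_lt_one hz
  have hpos : 0 < 1 - ‖dil h g z‖ ^ 2 := by nlinarith [norm_nonneg (dil h g z)]
  have hpick := one_sub_sq_norm_mul_norm_deriv_le hf.differentiableOn_dil hf.mapsTo_dil hz
  have hquot : ‖(ε + conj (dil h g z)) / (1 + ε * dil h g z)‖ ≤ 1 := by
    rw [norm_div, div_le_one (norm_pos_iff.mpr (hf.one_add_mul_dil_ne_zero hz hε))]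
    exact norm_add_conj_le_norm_one_add_mul hε hω.le
  rw [hf.pd_add_const_mul_sub_PH hz hε, norm_mul, norm_div, Complex.norm_real,
    Real.norm_of_nonneg hpos.le, ← mul_assoc, mul_div_assoc']
  exact mul_le_one₀ ((div_le_one hpos).mpr hpick) (norm_nonneg _) hquot

end SPH

lemma abs_ciSup_sub_ciSup_le {ι : Type*} [Nonempty ι] {f g : ι → ℝ} {c : ℝ}
    (hf : BddAbove (Set.range f)) (hg : BddAbove (Set.range g)) (hfg : ∀ i, |f i - g i| ≤ c) :
    |(⨆ i, f i) - ⨆ i, g i| ≤ c := by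
  rw [abs_sub_le_iff]
  constructor
  · refine sub_le_iff_le_add.mpr (ciSup_le fun i => ?_)
    linarith [le_ciSup hg i, (abs_sub_le_iff.mp (hfg i)).1]
  · refine sub_le_iff_le_add.mpr (ciSup_le fun i => ?_)
    linarith [le_ciSup hf i, (abs_sub_le_iff.mp (hfg i)).2]

section PreSchwarzianNorm

variable {P Q : ℂ → ℂ} {c : ℝ}

lemma abs_weighted_norm_sub_le {z : ℂ} (hz : z ∈ ball (0 : ℂ) 1) :
    |(1 - ‖z‖ ^ 2) * ‖P z‖ - (1 - ‖z‖ ^ 2) * ‖Q z‖| ≤ (1 - ‖z‖ ^ 2) * ‖P z - Q z‖ := by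
  have hw : 0 ≤ 1 - ‖z‖ ^ 2 := by nlinarith [mem_ball_zero_iff.mp hz, norm_nonneg z]
  rw [← mul_sub, abs_mul, abs_of_nonneg hw]
  exact mul_le_mul_of_nonneg_left (abs_norm_sub_norm_le _ _) hw

lemma pbdd_of_weighted_norm_sub_le (hQ : pbdd Q)
    (hPQ : ∀ z ∈ ball (0 : ℂ) 1, (1 - ‖z‖ ^ 2) * ‖P z - Q z‖ ≤ c) : pbdd P := by
  obtain ⟨M, hM⟩ := hQ
  refine ⟨M + c, Set.forall_mem_range.mpr fun z => ?_⟩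
  have hz := (abs_sub_le_iff.mp ((abs_weighted_norm_sub_le z.2).trans (hPQ z z.2))).1
  linarith [hM (Set.mem_range_self z)]

lemma abs_pnorm_sub_pnorm_le (hP : pbdd P) (hQ : pbdd Q)
    (hPQ : ∀ z ∈ ball (0 : ℂ) 1, (1 - ‖z‖ ^ 2) * ‖P z - Q z‖ ≤ c) :
    |pnorm P - pnorm Q| ≤ c :=
  have : Nonempty (ball (0 : ℂ) 1) := ⟨⟨0, mem_ball_self one_pos⟩⟩
  abs_ciSup_sub_ciSup_le hP hQ fun z => (abs_weighted_norm_sub_le z.2).trans (hPQ z z.2)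

end PreSchwarzianNorm

theorem stmt4 (h g : ℂ → ℂ) (hf : SPH h g) (hfin : pbdd (pd h))
    (ε₁ ε₂ : ℂ) (hε₁ : ‖ε₁‖ ≤ 1) (hε₂ : ‖ε₂‖ ≤ 1) :
    |pnorm (pd (fun w => h w + ε₁ * g w)) - pnorm (pd (fun w => h w + ε₂ * g w))| ≤ 2 := by
  have hPH : pbdd (PH h g) := pbdd_of_weighted_norm_sub_le hfin fun z hz => by
    simpa [norm_sub_rev] using
      hf.one_sub_sq_norm_mul_norm_pd_add_const_mul_sub_PH_le hz (ε := 0) (by simp)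
  have hdist : ∀ ε : ℂ, ‖ε‖ ≤ 1 →
      |pnorm (pd (fun w => h w + ε * g w)) - pnorm (PH h g)| ≤ 1 := fun ε hε =>
    have hclose := fun z hz => hf.one_sub_sq_norm_mul_norm_pd_add_const_mul_sub_PH_le hz hε
    abs_pnorm_sub_pnorm_le (pbdd_of_weighted_norm_sub_le hPH hclose) hPH hclose
  calc _ ≤ _ := abs_sub_le _ (pnorm (PH h g)) _
    _ ≤ 1 + 1 := add_le_add (hdist ε₁ hε₁) (abs_sub_comm (pnorm _) _ ▸ hdist ε₂ hε₂)
    _ = 2 := one_add_one_eq_two
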